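/- Let p be an odd prime and suppose sequences of polynomials P_n, Q_n ∈ Z_p[x] with deg < p^n satisfy P_n ≡ g·Q_n (mod ω_n(x)) for a fixed g ∈ Z_p[[x]], all P_n nonzero with μ(P_n) = 0 for n ≥ n_0, and λ(P_n) < p^n. Then for n ≥ n_0 with Q_n ≠ 0 and μ(Q_n) = 0, λ(P_n) = λ(g) + λ(Q_n) and μ(g) = 0. -/

import Mathlib

open Polynomial PowerSeries

/-- `ω_n(x) = (1+x)^(p^n) - 1 ∈ ℤ_p[x]`. -/
noncomputable def omegaPoly (p : ℕ) [Fact p.Prime] (n : ℕ) : Polynomial ℤ_[p] :=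
  (Polynomial.X + 1) ^ (p ^ n) - 1

/-- Weierstrass decomposition `F = u · p^μ · (X^λ + p·R)`, `u ∈ ℤ_p⟦X⟧ˣ`, `deg R < λ`. -/
def IsWeier (p : ℕ) [Fact p.Prime] (F : PowerSeries ℤ_[p]) (μ lam : ℕ) : Prop :=
  ∃ (u : (PowerSeries ℤ_[p])ˣ) (R : Polynomial ℤ_[p]), R.degree < (lam : ℕ) ∧
    F = (u : PowerSeries ℤ_[p]) *
      ((p : PowerSeries ℤ_[p]) ^ μ *
        (PowerSeries.X ^ lam + (p : PowerSeries ℤ_[p]) * (R : PowerSeries ℤ_[p])))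

lemma natCast_powerSeries_eq_C (p : ℕ) [Fact p.Prime] :
    (p : PowerSeries ℤ_[p]) = PowerSeries.C (p : ℤ_[p]) := by
  simp [map_natCast]

/-- Below the lambda invariant, coefficients are divisible by p (μ = 0 case). -/
lemma isWeier_coeff_lt {p : ℕ} [Fact p.Prime] {F : PowerSeries ℤ_[p]} {lam : ℕ}
    (h : IsWeier p F 0 lam) {k : ℕ} (hk : k < lam) :
    (p : ℤ_[p]) ∣ PowerSeries.coeff k F := by
  obtain ⟨u, R, hR, hF⟩ := h
  subst hF
  rw [pow_zero, one_mul, PowerSeries.coeff_mul]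
  apply Finset.dvd_sum
  rintro ⟨i, j⟩ hij
  rw [Finset.HasAntidiagonal.mem_antidiagonal] at hij
  have hj : j < lam := lt_of_le_of_lt (by omega) hk
  have : PowerSeries.coeff j (PowerSeries.X ^ lam
      + (p : PowerSeries ℤ_[p]) * (R : PowerSeries ℤ_[p]))
      = (p : ℤ_[p]) * R.coeff j := by
    rw [map_add, PowerSeries.coeff_X_pow, if_neg hj.ne, zero_add,
      natCast_powerSeries_eq_C, PowerSeries.coeff_C_mul, Polynomial.coeff_coe]
  simp only [this]
  exact Dvd.dvd.mul_left ⟨R.coeff j, by ring⟩ _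

/-- At the lambda invariant, the coefficient is not divisible by p (μ = 0 case). -/
lemma isWeier_coeff_not_dvd {p : ℕ} [Fact p.Prime] {F : PowerSeries ℤ_[p]} {lam : ℕ}
    (h : IsWeier p F 0 lam) :
    ¬ (p : ℤ_[p]) ∣ PowerSeries.coeff lam F := by
  obtain ⟨u, R, hR, hF⟩ := h
  subst hF
  intro hdvd
  have hexp : (u : PowerSeries ℤ_[p]) *
      ((p : PowerSeries ℤ_[p]) ^ 0 * (PowerSeries.X ^ lam
        + (p : PowerSeries ℤ_[p]) * (R : PowerSeries ℤ_[p])))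
      = (u : PowerSeries ℤ_[p]) * PowerSeries.X ^ lam
        + (p : PowerSeries ℤ_[p]) * ((u : PowerSeries ℤ_[p]) * (R : PowerSeries ℤ_[p])) := by
    ring
  rw [hexp, map_add] at hdvd
  have h1 : PowerSeries.coeff lam ((u : PowerSeries ℤ_[p]) * PowerSeries.X ^ lam)
      = PowerSeries.constantCoeff (u : PowerSeries ℤ_[p]) := by
    have := PowerSeries.coeff_mul_X_pow (u : PowerSeries ℤ_[p]) lam 0
    simpa using this
  have h2 : (p : ℤ_[p]) ∣ PowerSeries.coeff lam
      ((p : PowerSeries ℤ_[p]) * ((u : PowerSeries ℤ_[p]) * (R : PowerSeries ℤ_[p]))) := by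
    rw [natCast_powerSeries_eq_C, PowerSeries.coeff_C_mul]
    exact Dvd.intro _ rfl
  have h3 : (p : ℤ_[p]) ∣ PowerSeries.constantCoeff (u : PowerSeries ℤ_[p]) := by
    have h4 := dvd_sub hdvd h2
    rwa [add_sub_cancel_right, h1] at h4
  have hu : IsUnit (PowerSeries.constantCoeff (u : PowerSeries ℤ_[p]) ) :=
    u.isUnit.map (PowerSeries.constantCoeff)
  exact PadicInt.prime_p.not_unit (isUnit_of_dvd_unit h3 hu)


/-- If μ ≥ 1 every coefficient is divisible by p. -/
lemma isWeier_coeff_dvd_of_pos {p : ℕ} [Fact p.Prime] {F : PowerSeries ℤ_[p]} {μ lam : ℕ}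
    (h : IsWeier p F μ lam) (hμ : μ ≠ 0) (k : ℕ) :
    (p : ℤ_[p]) ∣ PowerSeries.coeff k F := by
  obtain ⟨u, R, hR, hF⟩ := h
  subst hF
  obtain ⟨m, rfl⟩ := Nat.exists_eq_succ_of_ne_zero hμ
  have hexp : (u : PowerSeries ℤ_[p]) * ((p : PowerSeries ℤ_[p]) ^ (m + 1) *
      (PowerSeries.X ^ lam + (p : PowerSeries ℤ_[p]) * (R : PowerSeries ℤ_[p])))
      = PowerSeries.C (p : ℤ_[p]) * ((u : PowerSeries ℤ_[p]) *
        ((p : PowerSeries ℤ_[p]) ^ m *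
          (PowerSeries.X ^ lam + (p : PowerSeries ℤ_[p]) * (R : PowerSeries ℤ_[p])))) := by
    rw [← natCast_powerSeries_eq_C]
    ring
  rw [hexp, PowerSeries.coeff_C_mul]
  exact Dvd.intro _ rfl

/-- Weierstrass invariants are additive in products. -/
lemma isWeier_mul {p : ℕ} [Fact p.Prime] {F G : PowerSeries ℤ_[p]} {μ₁ μ₂ l₁ l₂ : ℕ}
    (hF : IsWeier p F μ₁ l₁) (hG : IsWeier p G μ₂ l₂) :
    IsWeier p (F * G) (μ₁ + μ₂) (l₁ + l₂) := by
  obtain ⟨u₁, R₁, hR₁, hF⟩ := hF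
  obtain ⟨u₂, R₂, hR₂, hG⟩ := hG
  refine ⟨u₁ * u₂, R₁ * Polynomial.X ^ l₂ + R₂ * Polynomial.X ^ l₁
    + Polynomial.C (p : ℤ_[p]) * (R₁ * R₂), ?_, ?_⟩
  · have hcast : ((l₁ + l₂ : ℕ) : WithBot ℕ) = (l₁ : WithBot ℕ) + (l₂ : WithBot ℕ) := by
      push_cast; ring
    have d1 : (R₁ * Polynomial.X ^ l₂).degree < ((l₁ + l₂ : ℕ) : WithBot ℕ) := by
      refine lt_of_le_of_lt (Polynomial.degree_mul_le _ _) ?_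
      rw [Polynomial.degree_X_pow, hcast]
      exact WithBot.add_lt_add_right (by exact WithBot.natCast_ne_bot l₂) hR₁
    have d2 : (R₂ * Polynomial.X ^ l₁).degree < ((l₁ + l₂ : ℕ) : WithBot ℕ) := by
      refine lt_of_le_of_lt (Polynomial.degree_mul_le _ _) ?_
      rw [Polynomial.degree_X_pow, hcast, add_comm (l₁ : WithBot ℕ)]
      exact WithBot.add_lt_add_right (by exact WithBot.natCast_ne_bot l₁) hR₂
    have d3 : (Polynomial.C (p : ℤ_[p]) * (R₁ * R₂)).degree < ((l₁ + l₂ : ℕ) : WithBot ℕ) := by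
      refine lt_of_le_of_lt (Polynomial.degree_mul_le _ _) ?_
      refine lt_of_le_of_lt (add_le_add Polynomial.degree_C_le (Polynomial.degree_mul_le _ _)) ?_
      rw [hcast, zero_add]
      exact (add_le_add le_rfl hR₂.le).trans_lt (WithBot.add_lt_add_right (by exact WithBot.natCast_ne_bot (α := ℕ) l₂) hR₁)
    exact lt_of_le_of_lt (Polynomial.degree_add_le _ _)
      (max_lt (lt_of_le_of_lt (Polynomial.degree_add_le _ _) (max_lt d1 d2)) d3)
  · subst hF hG
    simp only [Polynomial.coe_add, Polynomial.coe_mul, Polynomial.coe_pow, Polynomial.coe_X,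
      Polynomial.coe_C, Units.val_mul, pow_add, ← natCast_powerSeries_eq_C]
    ring

/-- The low coefficients of `ω_n` are divisible by `p`. -/
lemma omegaPoly_coeff_dvd (p : ℕ) [hp : Fact p.Prime] (n k : ℕ) (hk : k < p ^ n) :
    (p : ℤ_[p]) ∣ (omegaPoly p n).coeff k := by
  have : (omegaPoly p n).coeff k
      = ((p ^ n).choose k : ℤ_[p]) - (if k = 0 then 1 else 0) := by
    rw [omegaPoly, Polynomial.coeff_sub, Polynomial.coeff_X_add_one_pow, Polynomial.coeff_one]
  rw [this]
  rcases eq_or_ne k 0 with rfl | hk0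
  · simp
  · rw [if_neg hk0, sub_zero]
    exact_mod_cast (Nat.cast_dvd_cast
      (hp.out.dvd_choose_pow hk0 hk.ne) : (p : ℤ_[p]) ∣ ((p ^ n).choose k : ℤ_[p]))

/-- Low coefficients of any multiple of `ω_n` are divisible by `p`. -/
lemma omega_mul_coeff_dvd (p : ℕ) [Fact p.Prime] (n : ℕ) (h : PowerSeries ℤ_[p])
    (k : ℕ) (hk : k < p ^ n) :
    (p : ℤ_[p]) ∣ PowerSeries.coeff k
      (((omegaPoly p n : Polynomial ℤ_[p]) : PowerSeries ℤ_[p]) * h) := by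
  rw [PowerSeries.coeff_mul]
  apply Finset.dvd_sum
  rintro ⟨i, j⟩ hij
  rw [Finset.HasAntidiagonal.mem_antidiagonal] at hij
  have hi : i < p ^ n := lt_of_le_of_lt (by omega) hk
  rw [Polynomial.coeff_coe]
  exact (omegaPoly_coeff_dvd p n i hi).mul_right _

/-- Let `p` be an odd prime, `P_n, Q_n ∈ ℤ_p[x]` with `deg < p^n` satisfy
`P_n ≡ g·Q_n (mod ω_n(x))` for a fixed `g ∈ ℤ_p⟦x⟧`, all `P_n ≠ 0` with `μ(P_n) = 0`
for `n ≥ n₀`, and `λ(P_n) < p^n`. Then for `n ≥ n₀` with `Q_n ≠ 0` and `μ(Q_n) = 0`,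
`λ(P_n) = λ(g) + λ(Q_n)` and `μ(g) = 0`. -/
theorem lambda_additive_along_congruence
    (p : ℕ) [Fact p.Prime] (hp : Odd p)
    (P Q : ℕ → Polynomial ℤ_[p]) (g : PowerSeries ℤ_[p])
    (hdegP : ∀ n, (P n).degree < ((p ^ n : ℕ) : WithBot ℕ))
    (hdegQ : ∀ n, (Q n).degree < ((p ^ n : ℕ) : WithBot ℕ))
    (hcong : ∀ n, ((omegaPoly p n : Polynomial ℤ_[p]) : PowerSeries ℤ_[p]) ∣
      (((P n : Polynomial ℤ_[p]) : PowerSeries ℤ_[p])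
        - g * ((Q n : Polynomial ℤ_[p]) : PowerSeries ℤ_[p])))
    (n₀ : ℕ) (lamP : ℕ → ℕ)
    (hP : ∀ n, n₀ ≤ n → P n ≠ 0 ∧
      IsWeier p ((P n : Polynomial ℤ_[p]) : PowerSeries ℤ_[p]) 0 (lamP n) ∧
      lamP n < p ^ n) :
    ∀ n, n₀ ≤ n → Q n ≠ 0 →
      ∀ (lamQ μg lamg : ℕ),
        IsWeier p ((Q n : Polynomial ℤ_[p]) : PowerSeries ℤ_[p]) 0 lamQ →
        IsWeier p g μg lamg →
        lamP n = lamg + lamQ ∧ μg = 0 := by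
  intro n hn hQn lamQ μg lamg hWQ hWg
  obtain ⟨hPne, hWP, hlt⟩ := hP n hn
  obtain ⟨h, hh⟩ := hcong n
  have key : ∀ k, k < p ^ n → (p : ℤ_[p]) ∣
      (PowerSeries.coeff k ((P n : Polynomial ℤ_[p]) : PowerSeries ℤ_[p])
        - PowerSeries.coeff k (g * ((Q n : Polynomial ℤ_[p]) : PowerSeries ℤ_[p]))) := by
    intro k hk
    rw [← map_sub, hh]
    exact omega_mul_coeff_dvd p n h k hk
  have hGQ : IsWeier p (g * ((Q n : Polynomial ℤ_[p]) : PowerSeries ℤ_[p])) μg (lamg + lamQ) := by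
    have := isWeier_mul hWg hWQ
    rwa [Nat.add_zero] at this
  have hμ : μg = 0 := by
    by_contra hne
    have hb := isWeier_coeff_dvd_of_pos hGQ hne (lamP n)
    have ha : (p : ℤ_[p]) ∣ PowerSeries.coeff (lamP n)
        ((P n : Polynomial ℤ_[p]) : PowerSeries ℤ_[p]) := by
      have := dvd_add (key (lamP n) hlt) hb
      rwa [sub_add_cancel] at this
    exact isWeier_coeff_not_dvd hWP ha
  subst hμ
  refine ⟨?_, rfl⟩
  rcases lt_trichotomy (lamP n) (lamg + lamQ) with hc | hc | hc
  · exfalso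
    have hb := isWeier_coeff_lt hGQ hc
    have ha : (p : ℤ_[p]) ∣ PowerSeries.coeff (lamP n)
        ((P n : Polynomial ℤ_[p]) : PowerSeries ℤ_[p]) := by
      have := dvd_add (key (lamP n) hlt) hb
      rwa [sub_add_cancel] at this
    exact isWeier_coeff_not_dvd hWP ha
  · exact hc
  · exfalso
    have ha := isWeier_coeff_lt hWP hc
    have hb : (p : ℤ_[p]) ∣ PowerSeries.coeff (lamg + lamQ)
        (g * ((Q n : Polynomial ℤ_[p]) : PowerSeries ℤ_[p])) := by
      have := dvd_sub ha (key (lamg + lamQ) (lt_trans hc hlt))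
      rwa [sub_sub_cancel] at this
    exact isWeier_coeff_not_dvd hGQ hb
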